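/- arXiv:2109.03005 — 9 statements merged into one kernel-verified Lean document; each statement's English description precedes it below -/
import Mathlib

section
/- Let G be a connected simple graph with adjacency matrix A and Perron eigenvector ν (positive eigenvector for the largest eigenvalue λ₁). If P = {V₁,...,Vₘ} is a weight-equitable partition of V(G), then the normalized weight-quotient matrix B̄* = (S̄*)ᵀ A S̄* has λ₁ as an eigenvalue; in fact its largest eigenvalue μ₁ equals λ₁. -/
open Finset Matrix

variable {V : Type*}

/-- The weight-intersection number `b*` of vertex `u` with respect to cell `D`,
for weight vector `ν`. -/
noncomputable def wInt [Fintype V] (G : SimpleGraph V) [DecidableRel G.Adj] (ν : V → ℝ)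
    (D : Finset V) (u : V) : ℝ :=
  (∑ v ∈ D, if G.Adj u v then ν v else 0) / ν u

/-- `Vc` lists the cells of a partition of the vertex set. -/
def IsPartition [Fintype V] {m : ℕ} (Vc : Fin m → Finset V) : Prop :=
  ∀ v : V, ∃! i : Fin m, v ∈ Vc i

/-- The partition with cells `Vc` is weight-equitable w.r.t. the weights `ν`. -/
def IsWeightEquitable [Fintype V] (G : SimpleGraph V) [DecidableRel G.Adj] (ν : V → ℝ)
    {m : ℕ} (Vc : Fin m → Finset V) : Prop :=
  ∀ i j : Fin m, ∀ u ∈ Vc i, ∀ u' ∈ Vc i, wInt G ν (Vc j) u = wInt G ν (Vc j) u'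

/-- The partition with cells `Vc` is equitable. -/
def IsEquitable [Fintype V] [DecidableEq V] (G : SimpleGraph V) [DecidableRel G.Adj]
    {m : ℕ} (Vc : Fin m → Finset V) : Prop :=
  ∀ i j : Fin m, ∀ u ∈ Vc i, ∀ u' ∈ Vc i,
    ((Vc j).filter (fun v => G.Adj u v)).card = ((Vc j).filter (fun v => G.Adj u' v)).card

/-! The columns of `S̄*` are orthonormal since the cells are disjoint, and weight-equitability
makes their span `A`-invariant: `A S̄* = S̄* B̄*`. So an eigenvector `y` of `B̄*` lifts to the
eigenvector `S̄* y` of `A` with the same eigenvalue, which is therefore at most `λ₁`; and `ν`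
lies in that span, `ν = S̄* (‖ρ(Vᵢ)‖)ᵢ`, which makes `(‖ρ(Vᵢ)‖)ᵢ` an eigenvector of `B̄*` for `λ₁`. -/

namespace Matrix

variable {R n m : Type*} [CommSemiring R] [Fintype n] [Fintype m]

theorem mul_eq_mul_mul_mul_of_mul_eq_one [DecidableEq m] {A : Matrix n n R} {S : Matrix n m R}
    {L : Matrix m n R} {C : Matrix m m R} (hLS : L * S = 1) (hAS : A * S = S * C) :
    A * S = S * (L * A * S) := by
  rw [Matrix.mul_assoc L A S, hAS, ← Matrix.mul_assoc L S C, hLS, Matrix.one_mul]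

theorem mulVec_ne_zero_of_mul_eq_one [DecidableEq m] {S : Matrix n m R} {L : Matrix m n R}
    (hLS : L * S = 1) {y : m → R} (hy : y ≠ 0) : S *ᵥ y ≠ 0 := by
  intro h
  apply hy
  rw [← one_mulVec y, ← hLS, ← mulVec_mulVec, h, mulVec_zero]

theorem mulVec_mulVec_eq_smul_of_mul_eq_mul {A : Matrix n n R} {S : Matrix n m R}
    {B : Matrix m m R} (hAS : A * S = S * B) {μ : R} {y : m → R} (hy : B *ᵥ y = μ • y) :
    A *ᵥ (S *ᵥ y) = μ • (S *ᵥ y) := by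
  rw [mulVec_mulVec, hAS, ← mulVec_mulVec, hy, mulVec_smul]

theorem mul_mul_mulVec_eq_smul_of_mul_eq_one [DecidableEq m] {A : Matrix n n R}
    {S : Matrix n m R} {L : Matrix m n R} (hLS : L * S = 1) {μ : R} {x : m → R}
    (hx : A *ᵥ (S *ᵥ x) = μ • (S *ᵥ x)) : (L * A * S) *ᵥ x = μ • x := by
  rw [← mulVec_mulVec, ← mulVec_mulVec, hx, mulVec_smul, mulVec_mulVec, hLS, one_mulVec]

end Matrix

section WeightQuotient

/-- `‖ρ(D)‖`, the Euclidean norm of the weight vector `ν` restricted to `D`. -/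
noncomputable def cellNorm (ν : V → ℝ) (D : Finset V) : ℝ :=
  Real.sqrt (∑ w ∈ D, ν w ^ 2)

theorem cellNorm_pos {ν : V → ℝ} (hν : ∀ v, 0 < ν v) {D : Finset V} (hD : D.Nonempty) :
    0 < cellNorm ν D :=
  Real.sqrt_pos.mpr (Finset.sum_pos (fun w _ => pow_pos (hν w) 2) hD)

theorem cellNorm_sq (ν : V → ℝ) (D : Finset V) : cellNorm ν D ^ 2 = ∑ w ∈ D, ν w ^ 2 :=
  Real.sq_sqrt (Finset.sum_nonneg fun w _ => sq_nonneg (ν w))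

variable [Fintype V] {m : ℕ} {Vc : Fin m → Finset V}

theorem IsPartition.eq_of_mem (hpart : IsPartition Vc) {u : V} {i j : Fin m}
    (hi : u ∈ Vc i) (hj : u ∈ Vc j) : i = j :=
  (hpart u).unique hi hj

theorem IsPartition.sum_ite_mem {R : Type*} [AddCommMonoid R] [DecidableEq V]
    (hpart : IsPartition Vc) {u : V} {j : Fin m} (hj : u ∈ Vc j) (f : Fin m → R) :
    ∑ i, (if u ∈ Vc i then f i else 0) = f j := by
  rw [Finset.sum_eq_single j (fun i _ hij => if_neg fun hi => hij (hpart.eq_of_mem hi hj))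
    (fun h => absurd (Finset.mem_univ j) h), if_pos hj]

variable [DecidableEq V]

noncomputable def normWeightCharMatrix (ν : V → ℝ) (Vc : Fin m → Finset V) :
    Matrix V (Fin m) ℝ :=
  fun u i => if u ∈ Vc i then ν u / cellNorm ν (Vc i) else 0

variable {ν : V → ℝ}

theorem transpose_normWeightCharMatrix_mul_self (hν : ∀ v, 0 < ν v)
    (hpart : IsPartition Vc) (hne : ∀ i, (Vc i).Nonempty) :
    (normWeightCharMatrix ν Vc)ᵀ * normWeightCharMatrix ν Vc = 1 := by
  ext i j
  simp only [Matrix.mul_apply, Matrix.transpose_apply, normWeightCharMatrix]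
  by_cases hij : i = j
  · subst hij
    simp_rw [Matrix.one_apply_eq, ite_zero_mul_ite_zero, and_self, Finset.sum_ite_mem,
      Finset.univ_inter, div_mul_div_comm, ← sq, ← Finset.sum_div, ← cellNorm_sq]
    exact div_self (pow_ne_zero 2 (cellNorm_pos hν (hne i)).ne')
  · rw [Matrix.one_apply_ne hij]
    refine Finset.sum_eq_zero fun u _ => ?_
    by_cases hi : u ∈ Vc i
    · rw [if_neg fun hj => hij (hpart.eq_of_mem hi hj), mul_zero]
    · rw [if_neg hi, zero_mul]

theorem normWeightCharMatrix_mulVec_cellNorm (hν : ∀ v, 0 < ν v)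
    (hpart : IsPartition Vc) (hne : ∀ i, (Vc i).Nonempty) :
    normWeightCharMatrix ν Vc *ᵥ (fun i => cellNorm ν (Vc i)) = ν := by
  funext u
  obtain ⟨j, hj, -⟩ := hpart u
  simp only [Matrix.mulVec, dotProduct, normWeightCharMatrix, ite_mul, zero_mul]
  rw [hpart.sum_ite_mem hj, div_mul_cancel₀ _ (cellNorm_pos hν (hne j)).ne']

theorem adjMatrix_mul_normWeightCharMatrix_apply (G : SimpleGraph V) [DecidableRel G.Adj]
    (hν : ∀ v, 0 < ν v) (u : V) (i : Fin m) :
    (G.adjMatrix ℝ * normWeightCharMatrix ν Vc) u i =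
      wInt G ν (Vc i) u * ν u / cellNorm ν (Vc i) := by
  have hterm : ∀ v, G.adjMatrix ℝ u v * normWeightCharMatrix ν Vc v i =
      if v ∈ Vc i then (if G.Adj u v then ν v else 0) / cellNorm ν (Vc i) else 0 := by
    intro v
    simp only [SimpleGraph.adjMatrix_apply, normWeightCharMatrix]
    split_ifs <;> ring
  rw [Matrix.mul_apply, Finset.sum_congr rfl fun v _ => hterm v, Finset.sum_ite_mem,
    Finset.univ_inter, ← Finset.sum_div, wInt, div_mul_cancel₀ _ (hν u).ne']

/-- For `u ∈ V_j` the entry `(A S̄*)_{u i}` is `b*_{j i} ν_u / ‖ρ(V_i)‖`, so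
`C_{j i} = b*_{j i} ‖ρ(V_j)‖ / ‖ρ(V_i)‖`. -/
theorem IsWeightEquitable.exists_adjMatrix_mul_normWeightCharMatrix_eq
    {G : SimpleGraph V} [DecidableRel G.Adj] (hWE : IsWeightEquitable G ν Vc)
    (hν : ∀ v, 0 < ν v) (hpart : IsPartition Vc) (hne : ∀ i, (Vc i).Nonempty) :
    ∃ C : Matrix (Fin m) (Fin m) ℝ,
      G.adjMatrix ℝ * normWeightCharMatrix ν Vc = normWeightCharMatrix ν Vc * C := by
  choose rep hrep using hne
  refine ⟨Matrix.of fun j i =>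
    wInt G ν (Vc i) (rep j) * cellNorm ν (Vc j) / cellNorm ν (Vc i), ?_⟩
  ext u i
  obtain ⟨j, hj, -⟩ := hpart u
  have hnorm := (cellNorm_pos hν ⟨_, hrep j⟩).ne'
  rw [adjMatrix_mul_normWeightCharMatrix_apply G hν, Matrix.mul_apply]
  simp only [normWeightCharMatrix, Matrix.of_apply, ite_mul, zero_mul]
  rw [hpart.sum_ite_mem hj, hWE j i _ (hrep j) u hj]
  field_simp

end WeightQuotient

theorem largest_eigenvalue_of_normalized_weight_quotient_general
    [Fintype V] [DecidableEq V] (G : SimpleGraph V) [DecidableRel G.Adj]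
    (hG : G.Connected) (ν : V → ℝ) (lam : ℝ)
    (hν : ∀ v, 0 < ν v)
    (heig : (G.adjMatrix ℝ).mulVec ν = lam • ν)
    (hmax : ∀ (μ : ℝ) (x : V → ℝ), x ≠ 0 → (G.adjMatrix ℝ).mulVec x = μ • x → μ ≤ lam)
    {m : ℕ} (Vc : Fin m → Finset V)
    (hpart : IsPartition Vc) (hne : ∀ i, (Vc i).Nonempty)
    (hWE : IsWeightEquitable G ν Vc) :
    let Sbar : Matrix V (Fin m) ℝ :=
      fun u i => if u ∈ Vc i then ν u / Real.sqrt (∑ w ∈ Vc i, (ν w) ^ 2) else 0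
    let Bbar : Matrix (Fin m) (Fin m) ℝ := Sbarᵀ * G.adjMatrix ℝ * Sbar
    (∃ x : Fin m → ℝ, x ≠ 0 ∧ Bbar.mulVec x = lam • x) ∧
      (∀ (μ : ℝ) (x : Fin m → ℝ), x ≠ 0 → Bbar.mulVec x = μ • x → μ ≤ lam) := by
  intro Sbar Bbar
  have hS : Sbarᵀ * Sbar = 1 := transpose_normWeightCharMatrix_mul_self hν hpart hne
  have hAS : G.adjMatrix ℝ * Sbar = Sbar * Bbar := by
    obtain ⟨C, hC⟩ := hWE.exists_adjMatrix_mul_normWeightCharMatrix_eq hν hpart hne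
    exact Matrix.mul_eq_mul_mul_mul_of_mul_eq_one hS hC
  have hSx : Sbar *ᵥ (fun i => cellNorm ν (Vc i)) = ν :=
    normWeightCharMatrix_mulVec_cellNorm hν hpart hne
  refine ⟨⟨fun i => cellNorm ν (Vc i), ?_, ?_⟩, fun μ y hy hμ => ?_⟩
  · obtain ⟨v⟩ := hG.nonempty
    obtain ⟨i, -, -⟩ := hpart v
    exact Function.ne_iff.mpr ⟨i, (cellNorm_pos hν (hne i)).ne'⟩
  · exact Matrix.mul_mul_mulVec_eq_smul_of_mul_eq_one hS (by rw [hSx]; exact heig)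
  · exact hmax μ _ (Matrix.mulVec_ne_zero_of_mul_eq_one hS hy)
      (Matrix.mulVec_mulVec_eq_smul_of_mul_eq_mul hAS hμ)

/-- Theorem: for a connected graph with Perron data `(lam, ν)` and a weight-equitable
partition, the normalized weight-quotient matrix has `lam` as its largest eigenvalue. -/
theorem largest_eigenvalue_of_normalized_weight_quotient
    [Fintype V] [DecidableEq V] (G : SimpleGraph V) [DecidableRel G.Adj]
    (hG : G.Connected) (ν : V → ℝ) (lam : ℝ)
    (hν : ∀ v, 0 < ν v)
    (heig : (G.adjMatrix ℝ).mulVec ν = lam • ν)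
    (hmax : ∀ (μ : ℝ) (x : V → ℝ), x ≠ 0 → (G.adjMatrix ℝ).mulVec x = μ • x → μ ≤ lam)
    {m : ℕ} (Vc : Fin m → Finset V)
    (hm : m < Fintype.card V)
    (hpart : IsPartition Vc) (hne : ∀ i, (Vc i).Nonempty)
    (hWE : IsWeightEquitable G ν Vc) :
    let Sbar : Matrix V (Fin m) ℝ :=
      fun u i => if u ∈ Vc i then ν u / Real.sqrt (∑ w ∈ Vc i, (ν w) ^ 2) else 0
    let Bbar : Matrix (Fin m) (Fin m) ℝ := Sbarᵀ * G.adjMatrix ℝ * Sbar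
    (∃ x : Fin m → ℝ, x ≠ 0 ∧ Bbar.mulVec x = lam • x) ∧
      (∀ (μ : ℝ) (x : Fin m → ℝ), x ≠ 0 → Bbar.mulVec x = μ • x → μ ≤ lam) :=
  largest_eigenvalue_of_normalized_weight_quotient_general G hG ν lam hν heig hmax Vc hpart hne hWE
end

section
/- Let G be a connected graph with Perron eigenvector ν and let P = {V₁,...,Vₘ} be a weight-equitable partition of V(G). Then ν is constant on each cell of P if and only if P is an equitable partition of G. -/
/-!
If `ν` is constant on every cell, the weight-intersection number `b*ᵢⱼ(u)` is `ν` on `Vⱼ` times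
the number of neighbours of `u` in `Vⱼ`, divided by `ν` on `Vᵢ`; so weight-equitability becomes
equitability.

Conversely, let `E` be the averaging matrix over the cells (the orthogonal projection onto the
vectors constant on cells). The entry of `A E` at `(u, v)` is the number of neighbours of `u` in
the cell of `v` divided by the size of that cell; for an equitable partition, double counting the
edges between two cells shows that `A E` is symmetric, hence `A E = E A`. Then `E ν` is again a
positive eigenvector for `λ`. On a connected graph a nonnegative eigenvector with a zero vanishes
(the eigenvalue equation at a zero spreads it to the neighbours), so a positive eigenvector is
unique up to scaling. Hence `E ν` is a nonzero multiple of `ν`, and `ν` is constant on cells.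
-/

open Finset Matrix

variable {V : Type*}

namespace SimpleGraph

section Perron

variable [Fintype V] {G : SimpleGraph V} [DecidableRel G.Adj] {lam : ℝ}

theorem Connected.eq_zero_of_nonneg_of_mulVec_eq_smul (hG : G.Connected) {x : V → ℝ}
    (hx : G.adjMatrix ℝ *ᵥ x = lam • x) (hx0 : 0 ≤ x) {u : V} (hu : x u = 0) : x = 0 := by
  have adj_step : ∀ a b, G.Adj a b → x a = 0 → x b = 0 := by
    intro a b hab ha
    have hsum : ∑ w ∈ G.neighborFinset a, x w = 0 := by
      simpa [adjMatrix_mulVec_apply, ha] using congrFun hx a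
    exact (sum_eq_zero_iff_of_nonneg fun w _ => hx0 w).1 hsum b (by simpa using hab)
  have walk_step : ∀ {a b : V} (p : G.Walk a b), x a = 0 → x b = 0 := by
    intro a b p
    induction p with
    | nil => exact id
    | cons h _ ih => exact fun ha => ih (adj_step _ _ h ha)
  funext v
  exact (hG.preconnected u v).elim fun p => walk_step p hu

theorem Connected.exists_eq_smul_of_mulVec_eq_smul (hG : G.Connected) {ν x : V → ℝ}
    (hν : ∀ v, 0 < ν v) (hνeig : G.adjMatrix ℝ *ᵥ ν = lam • ν)
    (hx : G.adjMatrix ℝ *ᵥ x = lam • x) : ∃ t : ℝ, x = t • ν := by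
  have := hG.nonempty
  -- with `t` the minimum of `x / ν`, the eigenvector `x - t • ν` is nonnegative and has a zero
  obtain ⟨a, -, ha⟩ := exists_min_image univ (fun v => x v / ν v) univ_nonempty
  refine ⟨x a / ν a, sub_eq_zero.1 <|
    hG.eq_zero_of_nonneg_of_mulVec_eq_smul (lam := lam) (u := a) ?_ ?_ ?_⟩
  · rw [mulVec_sub, mulVec_smul, hx, hνeig, smul_sub, smul_comm]
  · intro v
    simpa using (le_div_iff₀ (hν v)).1 (ha v (mem_univ v))
  · simp [div_mul_cancel₀ _ (hν a).ne']

end Perron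

end SimpleGraph

section FiberAverage

variable {ι : Type*} [Fintype V] [DecidableEq ι] (π : V → ι)

noncomputable def fiberAverageMatrix : Matrix V V ℝ :=
  of fun u v => (if π u = π v then 1 else 0) / #{w | π w = π v}

theorem fiberAverageMatrix_isSymm : (fiberAverageMatrix π).IsSymm := by
  ext u v
  by_cases h : π u = π v <;> simp [fiberAverageMatrix, h, eq_comm]

theorem fiberAverageMatrix_mulVec_congr (x : V → ℝ) {u u' : V} (h : π u = π u') :
    (fiberAverageMatrix π *ᵥ x) u = (fiberAverageMatrix π *ᵥ x) u' := by
  simp only [fiberAverageMatrix, mulVec, dotProduct, of_apply, h]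

theorem fiberAverageMatrix_mulVec_pos {x : V → ℝ} (hx : ∀ v, 0 < x v) (u : V) :
    0 < (fiberAverageMatrix π *ᵥ x) u := by
  refine sum_pos' (fun v _ => mul_nonneg ?_ (hx v).le) ⟨u, mem_univ u, mul_pos ?_ (hx u)⟩
  · exact div_nonneg (by split_ifs <;> norm_num) (Nat.cast_nonneg _)
  · have : 0 < #{w | π w = π u} := card_pos.2 ⟨u, by simp⟩
    simpa [fiberAverageMatrix] using this

theorem adjMatrix_mul_fiberAverageMatrix_apply (G : SimpleGraph V) [DecidableRel G.Adj]
    (u v : V) : (G.adjMatrix ℝ * fiberAverageMatrix π) u v =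
      #(({w | π w = π v} : Finset V).filter (G.Adj u ·)) / #{w | π w = π v} := by
  simp [fiberAverageMatrix, mul_apply, mul_div_assoc', ← sum_div, filter_filter, ← ite_and]

end FiberAverage

theorem IsPartition.exists_eq_fibers [Fintype V] {m : ℕ} {Vc : Fin m → Finset V}
    (h : IsPartition Vc) : ∃ π : V → Fin m, Vc = fun j => ({v | π v = j} : Finset V) := by
  choose π hπ using fun v => (h v).exists
  refine ⟨π, funext fun j => Finset.ext fun v => ?_⟩
  simpa using ⟨fun hv => (h v).unique (hπ v) hv, fun hj => hj ▸ hπ v⟩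

section Equitable

variable [Fintype V] [DecidableEq V] {G : SimpleGraph V} [DecidableRel G.Adj] {m : ℕ}
  {π : V → Fin m}

theorem IsEquitable.card_adj_mul_card_eq
    (hEq : IsEquitable G fun j => ({v | π v = j} : Finset V)) (u v : V) :
    #(({w | π w = π v} : Finset V).filter (G.Adj u ·)) * #({w | π w = π u} : Finset V) =
      #(({w | π w = π u} : Finset V).filter (G.Adj v ·)) * #({w | π w = π v} : Finset V) := by
  set Fu : Finset V := {w | π w = π u}
  set Fv : Finset V := {w | π w = π v}
  have hu : u ∈ Fu := mem_filter.2 ⟨mem_univ u, rfl⟩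
  have hv : v ∈ Fv := mem_filter.2 ⟨mem_univ v, rfl⟩
  -- count the edges between the cells of `u` and `v` from both sides
  calc #(Fv.filter (G.Adj u ·)) * #Fu
      = ∑ a ∈ Fu, #(Fv.bipartiteAbove G.Adj a) := by
        rw [mul_comm]
        exact (sum_const_nat fun a ha => hEq (π u) (π v) a ha u hu).symm
    _ = ∑ b ∈ Fv, #(Fu.bipartiteBelow G.Adj b) :=
        sum_card_bipartiteAbove_eq_sum_card_bipartiteBelow G.Adj
    _ = #(Fu.filter (G.Adj v ·)) * #Fv := by
        simp only [bipartiteBelow, G.adj_comm _]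
        rw [mul_comm]
        exact sum_const_nat fun b hb => hEq (π v) (π u) b hb v hv

theorem IsEquitable.commute_adjMatrix_fiberAverageMatrix
    (hEq : IsEquitable G fun j => ({v | π v = j} : Finset V)) :
    Commute (G.adjMatrix ℝ) (fiberAverageMatrix π) := by
  have card_ne_zero (u : V) : (#({w | π w = π u} : Finset V) : ℝ) ≠ 0 :=
    Nat.cast_ne_zero.2 (card_ne_zero.2 ⟨u, by simp⟩)
  have hsymm : (G.adjMatrix ℝ * fiberAverageMatrix π).IsSymm := by
    ext u v
    rw [transpose_apply, adjMatrix_mul_fiberAverageMatrix_apply,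
      adjMatrix_mul_fiberAverageMatrix_apply, div_eq_div_iff (card_ne_zero u) (card_ne_zero v)]
    exact_mod_cast hEq.card_adj_mul_card_eq v u
  calc G.adjMatrix ℝ * fiberAverageMatrix π
      = (G.adjMatrix ℝ * fiberAverageMatrix π)ᵀ := hsymm.symm
    _ = fiberAverageMatrix π * G.adjMatrix ℝ := by
      rw [transpose_mul, (fiberAverageMatrix_isSymm π).eq, G.transpose_adjMatrix]

theorem IsEquitable.eq_of_adjMatrix_mulVec_eq_smul
    (hEq : IsEquitable G fun j => ({v | π v = j} : Finset V)) (hG : G.Connected) {ν : V → ℝ}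
    {lam : ℝ} (hν : ∀ v, 0 < ν v) (heig : G.adjMatrix ℝ *ᵥ ν = lam • ν) {u u' : V}
    (h : π u = π u') : ν u = ν u' := by
  have hEν :
      G.adjMatrix ℝ *ᵥ (fiberAverageMatrix π *ᵥ ν) = lam • (fiberAverageMatrix π *ᵥ ν) := by
    rw [mulVec_mulVec, hEq.commute_adjMatrix_fiberAverageMatrix.eq, ← mulVec_mulVec, heig,
      mulVec_smul]
  obtain ⟨t, ht⟩ := hG.exists_eq_smul_of_mulVec_eq_smul hν heig hEν
  have ht0 : t ≠ 0 := by
    rintro rfl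
    simpa [ht] using fiberAverageMatrix_mulVec_pos π hν u
  have := fiberAverageMatrix_mulVec_congr π ν h
  rw [ht] at this
  simpa [ht0] using this

end Equitable

theorem wInt_eq_card_mul_div [Fintype V] {G : SimpleGraph V} [DecidableRel G.Adj] {ν : V → ℝ}
    {D : Finset V} {c : ℝ} (hD : ∀ v ∈ D, ν v = c) (u : V) :
    wInt G ν D u = #(D.filter (G.Adj u ·)) * c / ν u := by
  rw [wInt, ← sum_filter, sum_congr rfl fun v hv => hD v (mem_filter.1 hv).1, sum_const,
    nsmul_eq_mul]

theorem IsWeightEquitable.isEquitable_of_eq_on_cells [Fintype V] [DecidableEq V]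
    {G : SimpleGraph V} [DecidableRel G.Adj] {ν : V → ℝ} {m : ℕ} {Vc : Fin m → Finset V}
    (hWE : IsWeightEquitable G ν Vc) (hν : ∀ v, ν v ≠ 0)
    (hconst : ∀ i, ∀ u ∈ Vc i, ∀ u' ∈ Vc i, ν u = ν u') : IsEquitable G Vc := by
  intro i j u hu u' hu'
  obtain he | ⟨w, hw⟩ := (Vc j).eq_empty_or_nonempty
  · simp [he]
  have h := hWE i j u hu u' hu'
  rw [wInt_eq_card_mul_div (hconst j · · w hw), wInt_eq_card_mul_div (hconst j · · w hw),
    hconst i u hu u' hu'] at h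
  exact_mod_cast mul_right_cancel₀ (hν w) ((div_left_inj' (hν u')).1 h)

/-- For a weight-equitable partition of a connected graph, the Perron eigenvector is
constant on each cell iff the partition is equitable. -/
theorem perron_constant_on_cells_iff_equitable
    [Fintype V] [DecidableEq V] (G : SimpleGraph V) [DecidableRel G.Adj]
    (hG : G.Connected) (ν : V → ℝ) (lam : ℝ)
    (hν : ∀ v, 0 < ν v)
    (heig : (G.adjMatrix ℝ).mulVec ν = lam • ν)
    {m : ℕ} (Vc : Fin m → Finset V)
    (hpart : IsPartition Vc)
    (hWE : IsWeightEquitable G ν Vc) :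
    (∀ i : Fin m, ∀ u ∈ Vc i, ∀ u' ∈ Vc i, ν u = ν u') ↔ IsEquitable G Vc := by
  refine ⟨hWE.isEquitable_of_eq_on_cells fun v => (hν v).ne', fun hEq i u hu u' hu' => ?_⟩
  obtain ⟨π, rfl⟩ := hpart.exists_eq_fibers
  simp only [mem_filter, mem_univ, true_and] at hu hu'
  exact hEq.eq_of_adjMatrix_mulVec_eq_smul hG hν heig (hu.trans hu'.symm)
end

section
/- Every equitable partition of a connected graph is weight-equitable. -/
open Finset Matrix

variable {V : Type*}

/-!
Averaging over the cells of an equitable partition commutes with the adjacency matrix, because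
double counting the edges between cells `Vᵢ` and `Vⱼ` gives `|Vᵢ| bᵢⱼ = |Vⱼ| bⱼᵢ`. Hence the
cell average of `ν` is again a positive `λ`-eigenvector. On a connected graph a positive
`λ`-eigenvector is unique up to scaling: subtracting from `ν` the largest multiple of its
average that keeps the difference nonnegative leaves a nonnegative eigenvector with a zero, and
zeros of such a vector spread along edges. So `ν` is constant on cells, and then
`b*ᵢⱼ(u) = bᵢⱼ νⱼ / νᵢ`.
-/

open scoped BigOperators

namespace SimpleGraph

variable {α : Type*} (G : SimpleGraph V) [DecidableRel G.Adj]

theorem sum_sum_filter_adj_eq_sum_card_smul [AddCommMonoid α] (S T : Finset V) (f : V → α) :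
    ∑ v ∈ S, ∑ x ∈ T with G.Adj v x, f x = ∑ x ∈ T, #{v ∈ S | G.Adj x v} • f x := by
  simp_rw [sum_filter]
  rw [sum_comm]
  refine sum_congr rfl fun x _ => ?_
  simp_rw [G.adj_comm _ x]
  rw [← sum_filter, sum_const]

variable [Fintype V]

theorem adjMatrix_mulVec_eq_smul_iff [NonAssocSemiring α] {x : V → α} {lam : α} :
    G.adjMatrix α *ᵥ x = lam • x ↔ ∀ u, ∑ v ∈ G.neighborFinset u, x v = lam * x u := by
  simp only [funext_iff, adjMatrix_mulVec_apply, Pi.smul_apply, smul_eq_mul]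

variable {G}

theorem Connected.eq_zero_of_nonneg_of_mulVec_eq_smul_s4 [Semiring α] [PartialOrder α]
    [IsOrderedRing α] (hG : G.Connected) {z : V → α} {lam : α} (hz : 0 ≤ z)
    (heig : G.adjMatrix α *ᵥ z = lam • z) {v₀ : V} (hv₀ : z v₀ = 0) : z = 0 := by
  rw [adjMatrix_mulVec_eq_smul_iff] at heig
  have hadj : ∀ a b, G.Adj a b → z a = 0 → z b = 0 := fun a b hab ha =>
    (sum_eq_zero_iff_of_nonneg fun x _ => hz x).mp (by rw [heig, ha, mul_zero]) b
      ((G.mem_neighborFinset a b).mpr hab)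
  funext v
  obtain ⟨p⟩ := hG.preconnected v₀ v
  induction p with
  | nil => exact hv₀
  | cons h _ ih => exact ih (hadj _ _ h hv₀)

theorem Connected.exists_eq_smul_of_mulVec_eq_smul_s4 [Field α] [LinearOrder α]
    [IsStrictOrderedRing α] (hG : G.Connected) {x y : V → α} {lam : α}
    (hx : G.adjMatrix α *ᵥ x = lam • x) (hy : G.adjMatrix α *ᵥ y = lam • y)
    (hy_pos : ∀ v, 0 < y v) : ∃ c : α, x = c • y := by
  have := hG.nonempty
  obtain ⟨v₀, -, hmin⟩ := exists_min_image univ (fun v => x v / y v) univ_nonempty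
  refine ⟨x v₀ / y v₀, sub_eq_zero.mp
    (hG.eq_zero_of_nonneg_of_mulVec_eq_smul_s4 (lam := lam) (v₀ := v₀) (fun v => ?_) ?_ ?_)⟩
  · simpa using (le_div_iff₀ (hy_pos v)).mp (hmin v (mem_univ v))
  · rw [mulVec_sub, mulVec_smul, hx, hy, smul_sub, smul_comm]
  · simp [div_mul_cancel₀ _ (hy_pos v₀).ne']

end SimpleGraph

namespace IsPartition

variable [Fintype V] {m : ℕ} {Vc : Fin m → Finset V}

noncomputable def cellOf (hP : IsPartition Vc) (v : V) : Fin m := (hP v).exists.choose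

theorem mem_iff_cellOf_eq (hP : IsPartition Vc) {v : V} {i : Fin m} :
    v ∈ Vc i ↔ hP.cellOf v = i :=
  ⟨fun h => (hP v).unique (hP v).exists.choose_spec h, fun h => h ▸ (hP v).exists.choose_spec⟩

theorem mem_cellOf (hP : IsPartition Vc) (v : V) : v ∈ Vc (hP.cellOf v) :=
  hP.mem_iff_cellOf_eq.mpr rfl

theorem sum_sum_cell {M : Type*} [AddCommMonoid M] (hP : IsPartition Vc) (f : V → M) :
    ∑ i, ∑ x ∈ Vc i, f x = ∑ x, f x := by
  rw [← sum_fiberwise univ hP.cellOf f]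
  refine sum_congr rfl fun i _ => sum_congr ?_ fun _ _ => rfl
  ext v
  simp [hP.mem_iff_cellOf_eq]

noncomputable def cellAvg (hP : IsPartition Vc) (f : V → ℝ) (v : V) : ℝ :=
  𝔼 x ∈ Vc (hP.cellOf v), f x

theorem cellAvg_eq_of_mem (hP : IsPartition Vc) (f : V → ℝ) {v : V} {i : Fin m}
    (hv : v ∈ Vc i) :
    hP.cellAvg f v = 𝔼 x ∈ Vc i, f x := by
  rw [cellAvg, hP.mem_iff_cellOf_eq.mp hv]

theorem cellAvg_pos (hP : IsPartition Vc) {f : V → ℝ} (hf : ∀ v, 0 < f v) (v : V) :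
    0 < hP.cellAvg f v :=
  expect_pos (fun x _ => hf x) ⟨v, hP.mem_cellOf v⟩

theorem cellAvg_smul (hP : IsPartition Vc) (c : ℝ) (f : V → ℝ) :
    hP.cellAvg (c • f) = c • hP.cellAvg f := by
  funext v
  simp [cellAvg, mul_expect]

end IsPartition

namespace IsEquitable

variable [Fintype V] [DecidableEq V] {G : SimpleGraph V} [DecidableRel G.Adj] {m : ℕ}
  {Vc : Fin m → Finset V}

theorem card_mul_card_filter_adj (hEP : IsEquitable G Vc) {i j : Fin m} {u x : V}
    (hu : u ∈ Vc i) (hx : x ∈ Vc j) :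
    #(Vc j) * #{v ∈ Vc i | G.Adj x v} = #(Vc i) * #{v ∈ Vc j | G.Adj u v} := by
  have h := G.sum_sum_filter_adj_eq_sum_card_smul (Vc i) (Vc j) (fun _ => 1)
  simp only [sum_const, smul_eq_mul, mul_one] at h
  rw [sum_congr rfl fun v hv => hEP i j v hv u hu, sum_congr rfl fun y hy => hEP j i y hy x hx,
    sum_const, sum_const, smul_eq_mul, smul_eq_mul] at h
  exact h.symm

theorem sum_card_filter_adj_smul (hEP : IsEquitable G Vc) {i j : Fin m} {u : V}
    (hu : u ∈ Vc i) (f : V → ℝ) :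
    ∑ x ∈ Vc j, #{v ∈ Vc i | G.Adj x v} • f x
      = #(Vc i) • #{v ∈ Vc j | G.Adj u v} • 𝔼 x ∈ Vc j, f x := by
  obtain he | ⟨x₀, hx₀⟩ := (Vc j).eq_empty_or_nonempty
  · simp [he]
  rw [sum_congr rfl fun x hx => by rw [hEP j i x hx x₀ hx₀], ← smul_sum, ← card_smul_expect,
    smul_smul, smul_smul, ← hEP.card_mul_card_filter_adj hu hx₀, Nat.mul_comm]

theorem adjMatrix_mulVec_cellAvg (hEP : IsEquitable G Vc) (hP : IsPartition Vc)
    (f : V → ℝ) : G.adjMatrix ℝ *ᵥ hP.cellAvg f = hP.cellAvg (G.adjMatrix ℝ *ᵥ f) := by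
  have hsplit : ∀ (g : V → ℝ) (v : V),
      (G.adjMatrix ℝ *ᵥ g) v = ∑ j, ∑ x ∈ Vc j with G.Adj v x, g x := by
    intro g v
    rw [SimpleGraph.adjMatrix_mulVec_apply, SimpleGraph.neighborFinset_eq_filter, sum_filter,
      ← hP.sum_sum_cell]
    simp_rw [sum_filter]
  funext u
  have hu : u ∈ Vc (hP.cellOf u) := hP.mem_cellOf u
  -- scaling by the size of `u`'s cell turns the average on the right into a sum to double count
  apply smul_right_injective ℝ (card_ne_zero.mpr ⟨u, hu⟩)
  dsimp only
  rw [hP.cellAvg_eq_of_mem _ hu, card_smul_expect, hsplit, smul_sum]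
  simp_rw [hsplit, sum_comm (s := Vc (hP.cellOf u)), G.sum_sum_filter_adj_eq_sum_card_smul,
    hEP.sum_card_filter_adj_smul hu]
  refine sum_congr rfl fun j _ => ?_
  rw [sum_congr rfl fun x hx => hP.cellAvg_eq_of_mem f (mem_filter.mp hx).1, sum_const]

theorem isWeightEquitable_of_eq_on_cells (hEP : IsEquitable G Vc) {ν : V → ℝ} (a : Fin m → ℝ)
    (hν : ∀ i, ∀ u ∈ Vc i, ν u = a i) : IsWeightEquitable G ν Vc := by
  have hsum : ∀ j u, (∑ v ∈ Vc j, if G.Adj u v then ν v else 0)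
      = #{v ∈ Vc j | G.Adj u v} * a j := fun j u => by
    rw [← sum_filter, sum_congr rfl fun v hv => hν j v (mem_filter.mp hv).1, sum_const,
      nsmul_eq_mul]
  intro i j u hu u' hu'
  rw [wInt, wInt, hsum, hsum, hν i u hu, hν i u' hu', hEP i j u hu u' hu']

end IsEquitable

/-- Every equitable partition of a connected graph is weight-equitable. -/
theorem equitable_is_weightEquitable
    [Fintype V] [DecidableEq V] (G : SimpleGraph V) [DecidableRel G.Adj]
    (hG : G.Connected)
    (ν : V → ℝ) (lam : ℝ)
    (hν : ∀ v, 0 < ν v)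
    (heig : (G.adjMatrix ℝ).mulVec ν = lam • ν)
    {m : ℕ} (Vc : Fin m → Finset V)
    (hpart : IsPartition Vc)
    (hEP : IsEquitable G Vc) :
    IsWeightEquitable G ν Vc := by
  have hAvg : G.adjMatrix ℝ *ᵥ hpart.cellAvg ν = lam • hpart.cellAvg ν := by
    rw [hEP.adjMatrix_mulVec_cellAvg hpart, heig, hpart.cellAvg_smul]
  obtain ⟨c, hc⟩ := hG.exists_eq_smul_of_mulVec_eq_smul_s4 heig hAvg (hpart.cellAvg_pos hν)
  refine hEP.isWeightEquitable_of_eq_on_cells (fun i => c * 𝔼 x ∈ Vc i, ν x) fun i u hu => ?_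
  rw [congrFun hc u, Pi.smul_apply, smul_eq_mul, hpart.cellAvg_eq_of_mem ν hu]
end

section
/- If P is a weight-equitable partition of a connected graph G with adjacency matrix A, then the matrix X_P defined by (X_P)_{vv'} = ν_v ν_{v'}/‖ρ(P_i)‖² if v, v' lie in the same cell P_i and 0 otherwise, commutes with A. -/
open Finset Matrix

variable {V : Type*}

/-!
`X_P` is the orthogonal projection onto the span `W` of the weight-characteristic vectors
`ρ(Vᵢ)`. The `u`-entry of `A ρ(Vⱼ)` is `ν_u b*ᵢⱼ(u)`, so weight-equitability says precisely that
`A ρ(Vⱼ) ∈ W`: the subspace `W` is `A`-invariant, i.e. `X A X = A X`. As `A` and `X` are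
symmetric, `X A = (A X)ᵀ = (X A X)ᵀ = X A X = A X`.
-/

/-- The paper's `ρ(D)`. -/
def weightChar [DecidableEq V] (ν : V → ℝ) (D : Finset V) : V → ℝ :=
  fun v => if v ∈ D then ν v else 0

/-- The paper's `X_P`. -/
noncomputable def weightProj [DecidableEq V] (ν : V → ℝ) {m : ℕ} (Vc : Fin m → Finset V) :
    Matrix V V ℝ :=
  ∑ i, (∑ w ∈ Vc i, ν w ^ 2)⁻¹ • vecMulVec (weightChar ν (Vc i)) (weightChar ν (Vc i))

theorem Matrix.IsSymm.commute_of_mul_mul_eq {n R : Type*} [Fintype n] [CommSemiring R]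
    {A X : Matrix n n R} (hA : A.IsSymm) (hX : X.IsSymm) (h : X * (A * X) = A * X) :
    Commute X A :=
  calc X * A = (A * X)ᵀ := by rw [transpose_mul, hA.eq, hX.eq]
    _ = X * (A * X) := by
      conv_lhs => rw [← h]
      rw [transpose_mul, transpose_mul, hA.eq, hX.eq, Matrix.mul_assoc]
    _ = A * X := h

section weightProj

variable [DecidableEq V] {m : ℕ}

theorem weightProj_apply (ν : V → ℝ) (Vc : Fin m → Finset V) (v v' : V) :
    weightProj ν Vc v v' =
      ∑ i, if v ∈ Vc i ∧ v' ∈ Vc i then ν v * ν v' / (∑ w ∈ Vc i, ν w ^ 2) else 0 := by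
  simp only [weightProj, Matrix.sum_apply, Matrix.smul_apply, vecMulVec_apply, weightChar,
    smul_eq_mul]
  refine Finset.sum_congr rfl fun i _ => ?_
  split_ifs <;> simp_all [div_eq_inv_mul]

theorem isSymm_weightProj (ν : V → ℝ) (Vc : Fin m → Finset V) : (weightProj ν Vc).IsSymm := by
  simp only [IsSymm, weightProj, transpose_sum, transpose_smul, transpose_vecMulVec]

variable [Fintype V]

theorem weightProj_mulVec_weight_mul {ν : V → ℝ} (hν : ∀ v, ν v ≠ 0) {Vc : Fin m → Finset V}
    (hpart : IsPartition Vc) {b : V → ℝ} (hb : ∀ i, ∀ u ∈ Vc i, ∀ u' ∈ Vc i, b u = b u') :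
    weightProj ν Vc *ᵥ (ν * b) = ν * b := by
  ext u
  obtain ⟨i, hui, hunique⟩ := hpart u
  have hN : (∑ w ∈ Vc i, ν w ^ 2) ≠ 0 :=
    (Finset.sum_pos' (fun w _ => sq_nonneg (ν w)) ⟨u, hui, by have := hν u; positivity⟩).ne'
  have hdot : weightChar ν (Vc i) ⬝ᵥ (ν * b) = (∑ w ∈ Vc i, ν w ^ 2) * b u := by
    simp only [dotProduct, weightChar, Pi.mul_apply, ite_mul, zero_mul, Finset.sum_ite_mem,
      Finset.univ_inter, Finset.sum_mul]
    exact Finset.sum_congr rfl fun w hw => by rw [hb i w hw u hui]; ring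
  simp only [weightProj, sum_mulVec, smul_mulVec, vecMulVec_mulVec, Finset.sum_apply]
  rw [Finset.sum_eq_single i]
  · simp [hdot, weightChar, hui]
    field_simp
  · intro k _ hki
    simp [weightChar, show u ∉ Vc k from fun h => hki (hunique k h)]
  · simp

theorem weightProj_mul_mul_weightProj {ν : V → ℝ} {Vc : Fin m → Finset V} {A : Matrix V V ℝ}
    (hA : ∀ j, weightProj ν Vc *ᵥ (A *ᵥ weightChar ν (Vc j)) = A *ᵥ weightChar ν (Vc j)) :
    weightProj ν Vc * (A * weightProj ν Vc) = A * weightProj ν Vc := by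
  have hAX : A * weightProj ν Vc = ∑ j, (∑ w ∈ Vc j, ν w ^ 2)⁻¹ •
      vecMulVec (A *ᵥ weightChar ν (Vc j)) (weightChar ν (Vc j)) := by
    simp only [weightProj, Matrix.mul_sum, Matrix.mul_smul, mul_vecMulVec]
  simp only [hAX, Matrix.mul_sum, Matrix.mul_smul, mul_vecMulVec, hA]

theorem adjMatrix_mulVec_weightChar (G : SimpleGraph V) [DecidableRel G.Adj] {ν : V → ℝ}
    (hν : ∀ v, ν v ≠ 0) (D : Finset V) :
    G.adjMatrix ℝ *ᵥ weightChar ν D = ν * wInt G ν D := by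
  ext u
  simp only [mulVec, dotProduct, SimpleGraph.adjMatrix_apply, weightChar, Pi.mul_apply, wInt,
    mul_div_cancel₀ _ (hν u), boole_mul]
  calc _ = ∑ v, if v ∈ D then (if G.Adj u v then ν v else 0) else 0 :=
        Finset.sum_congr rfl fun v _ => by split_ifs <;> rfl
    _ = _ := by rw [Finset.sum_ite_mem, Finset.univ_inter]

end weightProj

theorem XP_commutes_with_adjMatrix_general
    [Fintype V] [DecidableEq V] (G : SimpleGraph V) [DecidableRel G.Adj]
    (ν : V → ℝ)
    (hν : ∀ v, 0 < ν v)
    {m : ℕ} (Vc : Fin m → Finset V)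
    (hpart : IsPartition Vc)
    (hWE : IsWeightEquitable G ν Vc) :
    let XP : Matrix V V ℝ := fun v v' =>
      ∑ i : Fin m, if v ∈ Vc i ∧ v' ∈ Vc i then ν v * ν v' / (∑ w ∈ Vc i, (ν w) ^ 2) else 0
    XP * G.adjMatrix ℝ = G.adjMatrix ℝ * XP := by
  intro XP
  have hν0 : ∀ v, ν v ≠ 0 := fun v => (hν v).ne'
  have hXP : XP = weightProj ν Vc := by ext v v'; exact (weightProj_apply ν Vc v v').symm
  rw [hXP]
  refine (G.isSymm_adjMatrix.commute_of_mul_mul_eq (isSymm_weightProj ν Vc) ?_).eq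
  refine weightProj_mul_mul_weightProj fun j => ?_
  rw [adjMatrix_mulVec_weightChar G hν0]
  exact weightProj_mulVec_weight_mul hν0 hpart fun i u hu u' hu' => hWE i j u hu u' hu'

/-- For a weight-equitable partition `P`, the matrix `X_P` (with entries
`ν_v ν_{v'} / ‖ρ(Vᵢ)‖²` for `v, v'` in a common cell `Vᵢ`, `0` otherwise)
commutes with the adjacency matrix. -/
theorem XP_commutes_with_adjMatrix
    [Fintype V] [DecidableEq V] (G : SimpleGraph V) [DecidableRel G.Adj]
    (hG : G.Connected)
    (ν : V → ℝ) (lam : ℝ)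
    (hν : ∀ v, 0 < ν v)
    (heig : (G.adjMatrix ℝ).mulVec ν = lam • ν)
    {m : ℕ} (Vc : Fin m → Finset V)
    (hpart : IsPartition Vc)
    (hWE : IsWeightEquitable G ν Vc) :
    let XP : Matrix V V ℝ := fun v v' =>
      ∑ i : Fin m, if v ∈ Vc i ∧ v' ∈ Vc i then ν v * ν v' / (∑ w ∈ Vc i, (ν w) ^ 2) else 0
    XP * G.adjMatrix ℝ = G.adjMatrix ℝ * XP :=
  XP_commutes_with_adjMatrix_general G ν hν Vc hpart hWE
end

section
/- Let G be a connected graph and P a partition of V(G). Then P is weight-equitable if and only if the subspace F(V,P) of real functions on V that are constant on the cells of P is invariant under the linear operator B defined by (Bf)(u) = Σ_{v∼u} (ν_v/ν_u) f(v). -/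
/-!
Splitting the sum defining `(Bf)(u)` over the cells shows that, if `f` takes the value `c j`
on the cell `Vc j`, then `(Bf)(u) = ∑ j, c j * b*(u, Vc j)`. So weight-equitability makes `Bf`
constant on cells, and conversely applying `B` to the indicator of a cell `Vc j` recovers
`u ↦ b*(u, Vc j)`.
-/

open Finset Matrix

variable {V : Type*}

noncomputable def weightedAdjOp [Fintype V] (G : SimpleGraph V) [DecidableRel G.Adj]
    (ν : V → ℝ) (f : V → ℝ) (u : V) : ℝ :=
  ∑ v : V, if G.Adj u v then (ν v / ν u) * f v else 0

def IsCellConstant {m : ℕ} (Vc : Fin m → Finset V) (f : V → ℝ) : Prop :=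
  ∀ i : Fin m, ∀ u ∈ Vc i, ∀ u' ∈ Vc i, f u = f u'

theorem IsCellConstant.exists_cellValue {m : ℕ} {Vc : Fin m → Finset V} {f : V → ℝ}
    (hf : IsCellConstant Vc f) :
    ∃ c : Fin m → ℝ, ∀ j, ∀ v ∈ Vc j, f v = c j := by
  classical
  refine ⟨fun j => if h : (Vc j).Nonempty then f h.choose else 0, fun j v hv => ?_⟩
  have hne : (Vc j).Nonempty := ⟨v, hv⟩
  simp only [hne, dite_true]
  exact hf j v hv _ hne.choose_spec

theorem sum_adj_mul_eq_mul_wInt [Fintype V] (G : SimpleGraph V) [DecidableRel G.Adj]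
    (ν f : V → ℝ) {D : Finset V} {a : ℝ} (hf : ∀ v ∈ D, f v = a) (u : V) :
    ∑ v ∈ D, (if G.Adj u v then (ν v / ν u) * f v else 0) = a * wInt G ν D u := by
  rw [wInt, Finset.sum_div, Finset.mul_sum]
  refine Finset.sum_congr rfl fun v hv => ?_
  split_ifs
  · rw [hf v hv]; ring
  · simp

namespace IsPartition

variable [Fintype V] {m : ℕ} {Vc : Fin m → Finset V}

theorem mem_iff_eq (hpart : IsPartition Vc) {v : V} {k : Fin m} (hv : v ∈ Vc k) (j : Fin m) :
    v ∈ Vc j ↔ j = k :=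
  ⟨fun hj => (hpart v).unique hj hv, fun h => h ▸ hv⟩

theorem sum_eq_sum_cells {M : Type*} [AddCommMonoid M] (hpart : IsPartition Vc) (g : V → M) :
    ∑ v, g v = ∑ j, ∑ v ∈ Vc j, g v := by
  classical
  have hcell (v : V) : ∑ j, (if v ∈ Vc j then g v else 0) = g v := by
    obtain ⟨k, hk, -⟩ := hpart v
    simp only [hpart.mem_iff_eq hk, Finset.sum_ite_eq', Finset.mem_univ, if_true]
  calc ∑ v, g v = ∑ v, ∑ j, (if v ∈ Vc j then g v else 0) := by simp only [hcell]
    _ = ∑ j, ∑ v ∈ Vc j, g v := by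
      rw [Finset.sum_comm]
      simp only [Finset.sum_ite_mem, Finset.univ_inter]

theorem weightedAdjOp_eq_sum_wInt (hpart : IsPartition Vc) (G : SimpleGraph V)
    [DecidableRel G.Adj] (ν : V → ℝ) {f : V → ℝ} {c : Fin m → ℝ}
    (hc : ∀ j, ∀ v ∈ Vc j, f v = c j) (u : V) :
    weightedAdjOp G ν f u = ∑ j, c j * wInt G ν (Vc j) u := by
  rw [weightedAdjOp, hpart.sum_eq_sum_cells]
  exact Finset.sum_congr rfl fun j _ => sum_adj_mul_eq_mul_wInt G ν f (hc j) u

theorem weightedAdjOp_indicator [DecidableEq V] (hpart : IsPartition Vc) (G : SimpleGraph V)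
    [DecidableRel G.Adj] (ν : V → ℝ) (j : Fin m) (u : V) :
    weightedAdjOp G ν (fun v => if v ∈ Vc j then 1 else 0) u = wInt G ν (Vc j) u := by
  have hc (k : Fin m) (v : V) (hv : v ∈ Vc k) :
      (if v ∈ Vc j then (1 : ℝ) else 0) = if j = k then 1 else 0 := by
    simp only [hpart.mem_iff_eq hv]
  rw [hpart.weightedAdjOp_eq_sum_wInt G ν hc]
  simp

end IsPartition

theorem weightEquitable_iff_B_invariant_general
    [Fintype V] (G : SimpleGraph V) [DecidableRel G.Adj]
    (ν : V → ℝ)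
    {m : ℕ} (Vc : Fin m → Finset V)
    (hpart : IsPartition Vc) :
    IsWeightEquitable G ν Vc ↔
      ∀ f : V → ℝ, (∀ i : Fin m, ∀ u ∈ Vc i, ∀ u' ∈ Vc i, f u = f u') →
        (∀ i : Fin m, ∀ u ∈ Vc i, ∀ u' ∈ Vc i,
          (∑ v : V, if G.Adj u v then (ν v / ν u) * f v else 0) =
          (∑ v : V, if G.Adj u' v then (ν v / ν u') * f v else 0)) := by
  classical
  change _ ↔ ∀ f, IsCellConstant Vc f → IsCellConstant Vc (weightedAdjOp G ν f)
  constructor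
  · intro hwe f hf i u hu u' hu'
    obtain ⟨c, hc⟩ := hf.exists_cellValue
    simp only [hpart.weightedAdjOp_eq_sum_wInt G ν hc]
    exact Finset.sum_congr rfl fun j _ => by rw [hwe i j u hu u' hu']
  · intro hB i j u hu u' hu'
    have hind : IsCellConstant Vc fun v => if v ∈ Vc j then (1 : ℝ) else 0 :=
      fun k v hv v' hv' => by simp only [hpart.mem_iff_eq hv, hpart.mem_iff_eq hv']
    simpa only [hpart.weightedAdjOp_indicator] using hB _ hind i u hu u' hu'

/-- A partition is weight-equitable iff the space of functions constant on its cells is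
invariant under the operator `(Bf)(u) = ∑_{v ∼ u} (ν_v / ν_u) f(v)`. -/
theorem weightEquitable_iff_B_invariant
    [Fintype V] [DecidableEq V] (G : SimpleGraph V) [DecidableRel G.Adj]
    (hG : G.Connected)
    (ν : V → ℝ) (lam : ℝ)
    (hν : ∀ v, 0 < ν v)
    (heig : (G.adjMatrix ℝ).mulVec ν = lam • ν)
    {m : ℕ} (Vc : Fin m → Finset V)
    (hpart : IsPartition Vc) :
    IsWeightEquitable G ν Vc ↔
      ∀ f : V → ℝ, (∀ i : Fin m, ∀ u ∈ Vc i, ∀ u' ∈ Vc i, f u = f u') →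
        (∀ i : Fin m, ∀ u ∈ Vc i, ∀ u' ∈ Vc i,
          (∑ v : V, if G.Adj u v then (ν v / ν u) * f v else 0) =
          (∑ v : V, if G.Adj u' v then (ν v / ν u') * f v else 0)) :=
  weightEquitable_iff_B_invariant_general G ν Vc hpart
end

section
/- If P and Q are weight-equitable partitions of a connected graph G, then their join P ∨ Q (in the partition lattice, i.e., the finest common coarsening) is also a weight-equitable partition of G. -/
/-!
A cell of a coarsening `r` of `s` is a disjoint union of `s`-cells, so every weight-intersection
number with respect to `r` is a sum of weight-intersection numbers with respect to `s`. Hence, if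
`s` is weight-equitable, the `r`-numbers are constant on the cells of `s`. Taking `r = s ⊔ t`, they
are constant on the cells of `s` and of `t`, and therefore on those of the equivalence relation
`s ⊔ t` that these generate.
-/

open Finset

variable {V : Type*}

open scoped Classical in
/-- The weight-intersection number of `u` with respect to the cell of `w` in the
partition given by the setoid `s`. -/
noncomputable def wIntS [Fintype V] (G : SimpleGraph V) (ν : V → ℝ) (s : Setoid V)
    (w u : V) : ℝ :=
  (∑ v : V, if G.Adj u v ∧ s.r w v then ν v else 0) / ν u

/-- The partition given by the setoid `s` is weight-equitable w.r.t. `ν`: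
the weight-intersection numbers are constant on each cell. -/
def IsWeightEquitableS [Fintype V] (G : SimpleGraph V) (ν : V → ℝ) (s : Setoid V) : Prop :=
  ∀ u u' : V, s.r u u' → ∀ w : V, wIntS G ν s w u = wIntS G ν s w u'

section

variable [Fintype V] (G : SimpleGraph V) (ν : V → ℝ)

open scoped Classical in
theorem wIntS_eq_sum_wIntS_of_le {s r : Setoid V} (hsr : s ≤ r) (w z : V) :
    wIntS G ν r w z = ∑ q : Quotient s, if r w q.out then wIntS G ν s q.out z else 0 := by
  have hterm : ∀ v, (if G.Adj z v ∧ r w v then ν v else 0) =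
      ∑ q : Quotient s, if r w q.out then (if G.Adj z v ∧ s q.out v then ν v else 0) else 0 := by
    intro v
    have hcell : ∀ q : Quotient s,
        (if r w q.out then (if G.Adj z v ∧ s q.out v then ν v else 0) else 0) =
          if ⟦v⟧ = q then (if G.Adj z v ∧ r w v then ν v else 0) else 0 := by
      intro q
      by_cases hq : ⟦v⟧ = q
      · subst hq
        have hout : s (⟦v⟧ : Quotient s).out v := Quotient.mk_out v
        have hw : r w (⟦v⟧ : Quotient s).out ↔ r w v :=
          ⟨fun h => r.trans h (hsr hout), fun h => r.trans h (r.symm (hsr hout))⟩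
        by_cases hwv : r w v <;> simp [hout, hw, hwv]
      · have hout : ¬ s q.out v := fun h => hq (Quotient.eq_mk_iff_out.mpr h).symm
        simp [hq, hout]
    rw [Fintype.sum_congr _ _ hcell, Finset.sum_ite_eq]
    simp
  simp only [wIntS, hterm]
  rw [Finset.sum_comm, Finset.sum_div]
  refine Fintype.sum_congr _ _ fun q => ?_
  split_ifs <;> simp

theorem IsWeightEquitableS.le_ker_wIntS {s r : Setoid V} (hs : IsWeightEquitableS G ν s)
    (hsr : s ≤ r) (w : V) : s ≤ Setoid.ker (wIntS G ν r w) := fun u u' h => by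
  classical
  rw [Setoid.ker_def, wIntS_eq_sum_wIntS_of_le G ν hsr, wIntS_eq_sum_wIntS_of_le G ν hsr]
  exact Fintype.sum_congr _ _ fun q => by rw [hs u u' h q.out]

end

theorem join_of_weightEquitable_is_weightEquitable_general
    [Fintype V] (G : SimpleGraph V)
    (ν : V → ℝ)
    (s t : Setoid V)
    (hs : IsWeightEquitableS G ν s) (ht : IsWeightEquitableS G ν t) :
    IsWeightEquitableS G ν (s ⊔ t) := fun _ _ h w =>
  sup_le (hs.le_ker_wIntS G ν le_sup_left w) (ht.le_ker_wIntS G ν le_sup_right w) h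

/-- The join of two weight-equitable partitions of a connected graph is weight-equitable. -/
theorem join_of_weightEquitable_is_weightEquitable
    [Fintype V] (G : SimpleGraph V) (hG : G.Connected)
    (ν : V → ℝ) (lam : ℝ)
    (hν : ∀ v, 0 < ν v)
    [DecidableRel G.Adj]
    (heig : (G.adjMatrix ℝ).mulVec ν = lam • ν)
    (s t : Setoid V)
    (hs : IsWeightEquitableS G ν s) (ht : IsWeightEquitableS G ν t) :
    IsWeightEquitableS G ν (s ⊔ t) :=
  join_of_weightEquitable_is_weightEquitable_general G ν s t hs ht
end

section
/- Every partition P of the vertex set of a connected graph G has a unique maximal (coarsest) weight-equitable refinement, given by the join of all weight-equitable partitions refining P. -/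
/-!
If `r` refines `t`, every `t`-class is the disjoint union of the `r`-classes it contains, so each
weight-intersection number of `t` is a sum of weight-intersection numbers of `r`. Consequently two
vertices related by a weight-equitable `r ≤ t` have the same weight-intersection numbers with
respect to `t`. For `t` the join of a family of weight-equitable partitions, "same
weight-intersection numbers with respect to `t`" is thus an equivalence relation above every member
of the family, hence above `t`: the join is weight-equitable. Applied to the weight-equitable
refinements of `s`, the join is the greatest of them.
-/

open Finset

variable {V : Type*}

open scoped Classical

namespace Setoid

variable {α : Type*} [Fintype α]

theorem card_class_congr (r : Setoid α) {a b : α} (hab : r.r a b) :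
    #{x | r.r a x} = #{x | r.r b x} := by
  congr 1
  ext x
  simp only [mem_filter, mem_univ, true_and]
  exact ⟨r.trans (r.symm hab), r.trans hab⟩

/-- Each `r`-class inside the `t`-class is met once per element, whence the division. -/
theorem sum_class_eq_sum_class_div_card {K : Type*} [Semifield K] [CharZero K]
    {r t : Setoid α} (hrt : r ≤ t) (f : α → K) (w : α) :
    ∑ v with t.r w v, f v =
      ∑ v' with t.r w v', (∑ v with r.r v' v, f v) / #{x | r.r v' x} := by
  calc ∑ v with t.r w v, f v
      = ∑ v with t.r w v, ∑ _v' with r.r v _v', f v / #{x | r.r v x} := by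
        refine sum_congr rfl fun v _ => ?_
        rw [sum_const, nsmul_eq_mul, mul_div_cancel₀]
        exact Nat.cast_ne_zero.2 (card_ne_zero.2 ⟨v, mem_filter.2 ⟨mem_univ v, r.refl v⟩⟩)
    _ = ∑ v' with t.r w v', ∑ v with r.r v' v, f v / #{x | r.r v x} := by
        refine sum_comm' fun v v' => ?_
        simp only [mem_filter, mem_univ, true_and]
        exact ⟨fun ⟨hwv, hvv'⟩ => ⟨r.symm hvv', t.trans hwv (hrt hvv')⟩,
          fun ⟨hv'v, hwv'⟩ => ⟨t.trans hwv' (hrt hv'v), r.symm hv'v⟩⟩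
    _ = _ := by
        refine sum_congr rfl fun v' _ => ?_
        rw [sum_div]
        refine sum_congr rfl fun v hv => ?_
        rw [card_class_congr r (mem_filter.1 hv).2]

end Setoid

section WeightEquitable

variable [Fintype V] (G : SimpleGraph V) (ν : V → ℝ)

theorem wIntS_eq_sum_div (s : Setoid V) (w u : V) :
    wIntS G ν s w u = (∑ v with s.r w v, if G.Adj u v then ν v else 0) / ν u := by
  simp only [wIntS, sum_filter, ← ite_and, and_comm]

theorem wIntS_of_le {r t : Setoid V} (hrt : r ≤ t) (w u : V) :
    wIntS G ν t w u = ∑ v' with t.r w v', wIntS G ν r v' u / #{x | r.r v' x} := by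
  rw [wIntS_eq_sum_div, Setoid.sum_class_eq_sum_class_div_card hrt, sum_div]
  refine sum_congr rfl fun v' _ => ?_
  rw [wIntS_eq_sum_div, div_right_comm]

theorem isWeightEquitableS_iff_le_ker (s : Setoid V) :
    IsWeightEquitableS G ν s ↔ s ≤ Setoid.ker fun u w => wIntS G ν s w u := by
  simp only [IsWeightEquitableS, Setoid.le_def, Setoid.ker_def, funext_iff]

theorem isWeightEquitableS_sSup {S : Set (Setoid V)} (hS : ∀ r ∈ S, IsWeightEquitableS G ν r) :
    IsWeightEquitableS G ν (sSup S) := by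
  rw [isWeightEquitableS_iff_le_ker]
  refine sSup_le fun r hr a b hab => Setoid.ker_def.2 <| funext fun w => ?_
  rw [wIntS_of_le G ν (le_sSup hr), wIntS_of_le G ν (le_sSup hr)]
  exact sum_congr rfl fun v' _ => by rw [hS r hr a b hab v']

theorem isGreatest_sSup_weightEquitableS_le (s : Setoid V) :
    IsGreatest {r | r ≤ s ∧ IsWeightEquitableS G ν r}
      (sSup {r | r ≤ s ∧ IsWeightEquitableS G ν r}) :=
  ⟨⟨sSup_le fun _ hr => hr.1, isWeightEquitableS_sSup G ν fun _ hr => hr.2⟩,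
    fun _ hr => le_sSup hr⟩

end WeightEquitable

theorem unique_maximal_weightEquitable_refinement_general
    [Fintype V] (G : SimpleGraph V)
    (ν : V → ℝ)
    (s : Setoid V) :
    (sSup {r : Setoid V | r ≤ s ∧ IsWeightEquitableS G ν r} ≤ s ∧
      IsWeightEquitableS G ν (sSup {r : Setoid V | r ≤ s ∧ IsWeightEquitableS G ν r}) ∧
      ∀ r : Setoid V, r ≤ s → IsWeightEquitableS G ν r →
        r ≤ sSup {r : Setoid V | r ≤ s ∧ IsWeightEquitableS G ν r}) ∧
    ∃! t : Setoid V, t ≤ s ∧ IsWeightEquitableS G ν t ∧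
      ∀ r : Setoid V, r ≤ s → IsWeightEquitableS G ν r → r ≤ t := by
  obtain ⟨⟨hle, hwe⟩, hmax⟩ := isGreatest_sSup_weightEquitableS_le G ν s
  have hmax' : ∀ r : Setoid V, r ≤ s → IsWeightEquitableS G ν r →
      r ≤ sSup {r | r ≤ s ∧ IsWeightEquitableS G ν r} := fun r hrs hr => hmax ⟨hrs, hr⟩
  refine ⟨⟨hle, hwe, hmax'⟩, _, ⟨hle, hwe, hmax'⟩, ?_⟩
  rintro t ⟨hts, ht, htmax⟩
  exact le_antisymm (hmax ⟨hts, ht⟩) (htmax _ hle hwe)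

/-- Every partition of a connected graph has a unique maximal (coarsest) weight-equitable
refinement, given by the join of all weight-equitable partitions refining it. -/
theorem unique_maximal_weightEquitable_refinement
    [Fintype V] (G : SimpleGraph V) (hG : G.Connected)
    (ν : V → ℝ) (lam : ℝ)
    (hν : ∀ v, 0 < ν v)
    [DecidableRel G.Adj]
    (heig : (G.adjMatrix ℝ).mulVec ν = lam • ν)
    (s : Setoid V) :
    (sSup {r : Setoid V | r ≤ s ∧ IsWeightEquitableS G ν r} ≤ s ∧
      IsWeightEquitableS G ν (sSup {r : Setoid V | r ≤ s ∧ IsWeightEquitableS G ν r}) ∧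
      ∀ r : Setoid V, r ≤ s → IsWeightEquitableS G ν r →
        r ≤ sSup {r : Setoid V | r ≤ s ∧ IsWeightEquitableS G ν r}) ∧
    ∃! t : Setoid V, t ≤ s ∧ IsWeightEquitableS G ν t ∧
      ∀ r : Setoid V, r ≤ s → IsWeightEquitableS G ν r → r ≤ t :=
  unique_maximal_weightEquitable_refinement_general G ν s
end

section
/- Let G and H be graphs with a balanced weight-equitable joint partition P, and suppose G is connected. Then for every cell P ∈ P, ‖ρ(P∩V(G))‖² / ‖ρ(P∩V(H))‖² = ‖ρ(V(G))‖² / ‖ρ(V(H))‖². -/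
open Finset

open scoped Classical in
/-- The weight-intersection number of `u` with respect to the cell `D`. -/
noncomputable def wIntC {α : Type*} (G : SimpleGraph α) (ν : α → ℝ) (D : Finset α)
    (u : α) : ℝ :=
  (∑ v ∈ D, if G.Adj u v then ν v else 0) / ν u

/-- `Vc` lists the cells of a partition of the vertex set. -/
def IsPartitionC {α : Type*} {m : ℕ} (Vc : Fin m → Finset α) : Prop :=
  ∀ v : α, ∃! i : Fin m, v ∈ Vc i

/-- The partition with cells `Vc` is weight-equitable w.r.t. weights `ν`. -/
def IsWeightEquitableC {α : Type*} (G : SimpleGraph α) (ν : α → ℝ)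
    {m : ℕ} (Vc : Fin m → Finset α) : Prop :=
  ∀ i j : Fin m, ∀ u ∈ Vc i, ∀ u' ∈ Vc i, wIntC G ν (Vc j) u = wIntC G ν (Vc j) u'

/-!
Write `b_ij` for the weight-intersection number of the cells `P_i` and `P_j`. Multiplying
`ν_u b_ij = Σ_{v ∈ N(u) ∩ P_j} ν_v` by `ν_u` and summing over `u ∈ P_i ∩ V(G)` gives the
`ν`-weighted number of edges between `P_i ∩ V(G)` and `P_j ∩ V(G)`, because a vertex of `G`
has all its neighbours in `G`. That count is symmetric, so
`‖ρ(P_i ∩ V(G))‖² b_ij = ‖ρ(P_j ∩ V(G))‖² b_ji`, and likewise for `H`. Dividing the two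
relations, the cells `P_i` and `P_j` have the same ratio as soon as `b_ij ≠ 0`, which happens
whenever a `G`-edge joins them. As `G` is connected and every cell meets `V(G)`, all cells have
the same ratio, and summing over the cells shows that it is `‖ρ(V(G))‖² / ‖ρ(V(H))‖²`.
-/

theorem div_eq_div_of_mul_eq_mul {K : Type*} [Field K] {a a' b b' c c' : K} (ha : a ≠ 0)
    (hc : c ≠ 0) (h₁ : a * c = a' * c') (h₂ : b * c = b' * c') : a / b = a' / b' := by
  have hc' : c' ≠ 0 := right_ne_zero_of_mul (h₁ ▸ mul_ne_zero ha hc)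
  rw [← mul_div_mul_right a b hc, ← mul_div_mul_right a' b' hc', h₁, h₂]

theorem sum_div_sum_eq_of_forall_div_eq {ι K : Type*} [Field K] {s : Finset ι} {f g : ι → K}
    {r : K} (hg : ∀ i ∈ s, g i ≠ 0) (hs : (∑ i ∈ s, g i) ≠ 0) (h : ∀ i ∈ s, f i / g i = r) :
    (∑ i ∈ s, f i) / ∑ i ∈ s, g i = r := by
  rw [div_eq_iff hs, mul_sum]
  exact sum_congr rfl fun i hi => (div_eq_iff (hg i hi)).1 (h i hi)

theorem SimpleGraph.Preconnected.apply_eq_of_forall_adj {V β : Type*} {G : SimpleGraph V}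
    (hG : G.Preconnected) {f : V → β} (h : ∀ a b, G.Adj a b → f a = f b) (a b : V) :
    f a = f b := by
  obtain ⟨w⟩ := hG a b
  induction w with
  | nil => rfl
  | cons hadj _ ih => exact (h _ _ hadj).trans ih

theorem SimpleGraph.isLeft_of_sum_adj {V W : Type*} {G : SimpleGraph V} {H : SimpleGraph W}
    {x y : V ⊕ W} (hxy : (G ⊕g H).Adj x y) (hx : x.isLeft) : y.isLeft := by
  cases x <;> cases y <;> simp_all

theorem SimpleGraph.isRight_of_sum_adj {V W : Type*} {G : SimpleGraph V} {H : SimpleGraph W}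
    {x y : V ⊕ W} (hxy : (G ⊕g H).Adj x y) (hx : x.isRight) : y.isRight := by
  cases x <;> cases y <;> simp_all

namespace IsPartitionC

variable {α : Type*} {m : ℕ} {Vc : Fin m → Finset α}

noncomputable def cell (hVc : IsPartitionC Vc) (x : α) : Fin m :=
  (hVc x).exists.choose

theorem mem_cell (hVc : IsPartitionC Vc) (x : α) : x ∈ Vc (hVc.cell x) :=
  (hVc x).exists.choose_spec

theorem cell_eq_of_mem (hVc : IsPartitionC Vc) {x : α} {i : Fin m} (hx : x ∈ Vc i) :
    hVc.cell x = i :=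
  (hVc x).unique (hVc.mem_cell x) hx

theorem sum_sum_filter [Fintype α] {M : Type*} [AddCommMonoid M] (hVc : IsPartitionC Vc)
    (p : α → Prop) [DecidablePred p] (f : α → M) :
    ∑ i, ∑ x ∈ (Vc i).filter p, f x = ∑ x ∈ univ.filter p, f x := by
  classical
  have hdisj : ((univ : Finset (Fin m)) : Set (Fin m)).PairwiseDisjoint fun i => (Vc i).filter p :=
    fun i _ j _ hij => disjoint_left.2 fun x hxi hxj =>
      hij ((hVc x).unique (mem_filter.1 hxi).1 (mem_filter.1 hxj).1)
  rw [← sum_biUnion hdisj]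
  congr 1
  ext x
  simpa using fun _ => (hVc x).exists

end IsPartitionC

section WeightIntersection

-- `wIntC` decides adjacency classically, so the sums below must do the same.
open scoped Classical

variable {α : Type*} {G : SimpleGraph α} {ν : α → ℝ}

theorem mul_wIntC {u : α} (hu : ν u ≠ 0) (D : Finset α) :
    ν u * wIntC G ν D u = ∑ v ∈ D, if G.Adj u v then ν v else 0 :=
  mul_div_cancel₀ _ hu

theorem wIntC_pos (hν : ∀ x, 0 < ν x) {D : Finset α} {u v : α} (hv : v ∈ D) (huv : G.Adj u v) :
    0 < wIntC G ν D u := by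
  refine div_pos (sum_pos' (fun x _ => ?_) ⟨v, hv, by simpa [huv] using hν v⟩) (hν u)
  split_ifs
  exacts [(hν x).le, le_rfl]

theorem wIntC_filter_of_closed {p : α → Prop} [DecidablePred p]
    (hp : ∀ u v, G.Adj u v → p u → p v) (D : Finset α) {u : α} (hu : p u) :
    wIntC G ν (D.filter p) u = wIntC G ν D u := by
  rw [wIntC, wIntC, sum_filter]
  congr 1
  refine sum_congr rfl fun v _ => ?_
  by_cases huv : G.Adj u v
  · simp [huv, hp u v huv hu]
  · simp [huv]

theorem sum_sq_mul_wIntC_comm (hν : ∀ x, ν x ≠ 0) (S T : Finset α) :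
    ∑ u ∈ S, ν u ^ 2 * wIntC G ν T u = ∑ v ∈ T, ν v ^ 2 * wIntC G ν S v := by
  have hedges : ∀ S T : Finset α, ∑ u ∈ S, ν u ^ 2 * wIntC G ν T u =
      ∑ u ∈ S, ∑ v ∈ T, if G.Adj u v then ν u * ν v else 0 := fun S T =>
    sum_congr rfl fun u _ => by
      rw [sq, mul_assoc, mul_wIntC (hν u), mul_sum]
      simp_rw [mul_ite, mul_zero]
  rw [hedges, hedges, sum_comm]
  simp_rw [G.adj_comm, mul_comm]

end WeightIntersection

namespace IsWeightEquitableC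

variable {α : Type*} {G : SimpleGraph α} {ν : α → ℝ} {m : ℕ} {Vc : Fin m → Finset α}
  {p : α → Prop} [DecidablePred p]

theorem sum_sq_mul_wIntC_filter (hWE : IsWeightEquitableC G ν Vc)
    (hp : ∀ u v, G.Adj u v → p u → p v) {i : Fin m} (j : Fin m) {w : α} (hw : w ∈ Vc i) :
    ∑ u ∈ (Vc i).filter p, ν u ^ 2 * wIntC G ν ((Vc j).filter p) u =
      (∑ u ∈ (Vc i).filter p, ν u ^ 2) * wIntC G ν (Vc j) w := by
  rw [sum_mul]
  refine sum_congr rfl fun u hu => ?_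
  rw [mem_filter] at hu
  rw [wIntC_filter_of_closed hp _ hu.2, hWE i j u hu.1 w hw]

theorem sum_sq_mul_wIntC_symm (hWE : IsWeightEquitableC G ν Vc) (hν : ∀ x, ν x ≠ 0)
    (hp : ∀ u v, G.Adj u v → p u → p v) {i j : Fin m} {u v : α} (hu : u ∈ Vc i)
    (hv : v ∈ Vc j) :
    (∑ x ∈ (Vc i).filter p, ν x ^ 2) * wIntC G ν (Vc j) u =
      (∑ x ∈ (Vc j).filter p, ν x ^ 2) * wIntC G ν (Vc i) v := by
  rw [← hWE.sum_sq_mul_wIntC_filter hp j hu, ← hWE.sum_sq_mul_wIntC_filter hp i hv,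
    sum_sq_mul_wIntC_comm hν]

theorem div_eq_div_of_adj (hWE : IsWeightEquitableC G ν Vc) (hν : ∀ x, 0 < ν x)
    {q : α → Prop} [DecidablePred q] (hp : ∀ u v, G.Adj u v → p u → p v)
    (hq : ∀ u v, G.Adj u v → q u → q v) {i j : Fin m} {u v : α} (hu : u ∈ Vc i) (hv : v ∈ Vc j)
    (hpu : p u) (huv : G.Adj u v) :
    (∑ x ∈ (Vc i).filter p, ν x ^ 2) / (∑ x ∈ (Vc i).filter q, ν x ^ 2) =
      (∑ x ∈ (Vc j).filter p, ν x ^ 2) / (∑ x ∈ (Vc j).filter q, ν x ^ 2) := by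
  have hν' : ∀ x, ν x ≠ 0 := fun x => (hν x).ne'
  have hpos : 0 < ∑ x ∈ (Vc i).filter p, ν x ^ 2 :=
    sum_pos' (fun x _ => sq_nonneg _) ⟨u, mem_filter.2 ⟨hu, hpu⟩, pow_pos (hν u) 2⟩
  exact div_eq_div_of_mul_eq_mul hpos.ne' (wIntC_pos hν hv huv).ne'
    (hWE.sum_sq_mul_wIntC_symm hν' hp hu hv) (hWE.sum_sq_mul_wIntC_symm hν' hq hu hv)

end IsWeightEquitableC

theorem balanced_joint_partition_norm_ratio_general
    {V W : Type*} [Fintype V] [Fintype W]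
    (G : SimpleGraph V) (H : SimpleGraph W)
    (hG : G.Connected)
    (ν : V ⊕ W → ℝ)
    (hν : ∀ x, 0 < ν x)
    {m : ℕ} (Vc : Fin m → Finset (V ⊕ W))
    (hpart : IsPartitionC Vc)
    (hWE : IsWeightEquitableC (G ⊕g H) ν Vc)
    (hbal : ∀ i : Fin m, (∃ u : V, Sum.inl u ∈ Vc i) ∧ (∃ w : W, Sum.inr w ∈ Vc i)) :
    ∀ i : Fin m,
      (∑ x ∈ (Vc i).filter (fun x => x.isLeft), (ν x) ^ 2) /
        (∑ x ∈ (Vc i).filter (fun x => x.isRight), (ν x) ^ 2) =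
      (∑ u : V, (ν (Sum.inl u)) ^ 2) / (∑ w : W, (ν (Sum.inr w)) ^ 2) := by
  intro i
  set ratio : Fin m → ℝ := fun j => (∑ x ∈ (Vc j).filter (fun x => x.isLeft), ν x ^ 2) /
    ∑ x ∈ (Vc j).filter (fun x => x.isRight), ν x ^ 2
  have hadj (a a' : V) (h : G.Adj a a') :
      ratio (hpart.cell (.inl a)) = ratio (hpart.cell (.inl a')) :=
    hWE.div_eq_div_of_adj hν (fun _ _ => SimpleGraph.isLeft_of_sum_adj)
      (fun _ _ => SimpleGraph.isRight_of_sum_adj) (hpart.mem_cell _) (hpart.mem_cell _) rfl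
      (SimpleGraph.sum_adj_inl.2 h)
  have hconst (j : Fin m) : ratio j = ratio i := by
    obtain ⟨a, ha⟩ := (hbal j).1
    obtain ⟨a', ha'⟩ := (hbal i).1
    rw [← hpart.cell_eq_of_mem ha, ← hpart.cell_eq_of_mem ha']
    exact hG.preconnected.apply_eq_of_forall_adj hadj a a'
  have hright_pos (j : Fin m) : 0 < ∑ x ∈ (Vc j).filter (fun x => x.isRight), ν x ^ 2 :=
    let ⟨w, hw⟩ := (hbal j).2
    sum_pos' (fun _ _ => sq_nonneg _) ⟨.inr w, mem_filter.2 ⟨hw, rfl⟩, pow_pos (hν _) 2⟩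
  change ratio i = _
  rw [← sum_div_sum_eq_of_forall_div_eq (fun j _ => (hright_pos j).ne')
    (sum_pos (fun j _ => hright_pos j) ⟨i, mem_univ i⟩).ne' fun j _ => hconst j,
    hpart.sum_sum_filter, hpart.sum_sum_filter]
  simp [sum_filter, Fintype.sum_sum_type]

/-- For a balanced weight-equitable joint partition of `G` and `H` with `G` connected,
the ratio `‖ρ(P∩V(G))‖² / ‖ρ(P∩V(H))‖²` is the same for every cell `P`, namely
`‖ρ(V(G))‖² / ‖ρ(V(H))‖²`. -/
theorem balanced_joint_partition_norm_ratio
    {V W : Type*} [Fintype V] [Fintype W] [DecidableEq V] [DecidableEq W]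
    (G : SimpleGraph V) (H : SimpleGraph W)
    [DecidableRel G.Adj] [DecidableRel H.Adj] [DecidableRel (G ⊕g H).Adj]
    (hG : G.Connected)
    (ν : V ⊕ W → ℝ) (lam : ℝ)
    (hν : ∀ x, 0 < ν x)
    (heig : ((G ⊕g H).adjMatrix ℝ).mulVec ν = lam • ν)
    {m : ℕ} (Vc : Fin m → Finset (V ⊕ W))
    (hpart : IsPartitionC Vc)
    (hWE : IsWeightEquitableC (G ⊕g H) ν Vc)
    (hbal : ∀ i : Fin m, (∃ u : V, Sum.inl u ∈ Vc i) ∧ (∃ w : W, Sum.inr w ∈ Vc i)) :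
    ∀ i : Fin m,
      (∑ x ∈ (Vc i).filter (fun x => x.isLeft), (ν x) ^ 2) /
        (∑ x ∈ (Vc i).filter (fun x => x.isRight), (ν x) ^ 2) =
      (∑ u : V, (ν (Sum.inl u)) ^ 2) / (∑ w : W, (ν (Sum.inr w)) ^ 2) :=
  balanced_joint_partition_norm_ratio_general G H hG ν hν Vc hpart hWE hbal
end

section
/- Let G be a connected cograph. Then every weight-equitable partition of V(G) into n/2 cells each of size 2 is an equitable partition of G. -/
open Finset Matrix

variable {V : Type*}

/-- A cograph: a simple graph with no induced path on four vertices. -/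
def IsCograph (G : SimpleGraph V) : Prop :=
  ∀ a b c d : V, a ≠ b → a ≠ c → a ≠ d → b ≠ c → b ≠ d → c ≠ d →
    ¬(G.Adj a b ∧ G.Adj b c ∧ G.Adj c d ∧ ¬G.Adj a c ∧ ¬G.Adj b d ∧ ¬G.Adj a d)

/-!
A connected cograph has diameter at most two, so two non-adjacent vertices `u, u'` of a cell
have a common neighbour `c`. If the cellmate `d` of `c` were adjacent to `u` but not to `u'`,
then `u' - c - u - d` would be an induced `P₄` unless `c ~ d`; but adjacent cellmates have equal
weight, and then comparing `b*` of `c` and of `d` towards the cell `{u, u'}` forces `ν u' = 0`.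
Hence `u` and `u'` see the same neighbours in the cell of `c`, which makes their `b*` numerators
towards that cell equal and positive, so `ν u = ν u'`. Within every cell the weights thus agree,
and towards a cell `{v, w}` with positive weights the weighted neighbour count determines the
neighbour count.
-/

theorem Finset.card_eq_of_sum_eq_of_subset_of_card_eq_two {α : Type*} [DecidableEq α]
    {D S T : Finset α} {f : α → ℝ} (hD : #D = 2) (hf : ∀ a ∈ D, 0 < f a)
    (hS : S ⊆ D) (hT : T ⊆ D) (h : ∑ a ∈ S, f a = ∑ a ∈ T, f a) : #S = #T := by
  obtain ⟨a, b, hab, rfl⟩ := card_eq_two.1 hD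
  have ha := hf a (by simp)
  have hb := hf b (by simp)
  have hS' := mem_powerset.2 hS
  have hT' := mem_powerset.2 hT
  simp only [powerset_insert, mem_union, mem_powerset, subset_singleton_iff, mem_image,
    exists_eq_or_imp, insert_empty_eq, ↓existsAndEq, true_and] at hS' hT'
  rcases hS' with (rfl | rfl) | rfl | rfl <;> rcases hT' with (rfl | rfl) | rfl | rfl <;>
    simp only [sum_empty, sum_singleton, sum_pair hab, card_empty, card_singleton,
      card_pair hab] at h ⊢ <;> linarith

theorem Finset.eq_pair_of_card_eq_two {α : Type*} [DecidableEq α] {s : Finset α} {a b : α}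
    (hs : #s = 2) (ha : a ∈ s) (hb : b ∈ s) (hab : a ≠ b) : s = {a, b} :=
  (eq_of_subset_of_card_le (insert_subset ha (singleton_subset_iff.2 hb))
    (by rw [hs, card_pair hab])).symm

theorem IsCograph.exists_adj_adj_of_reachable {G : SimpleGraph V} (hcog : IsCograph G)
    {u v : V} (h : G.Reachable u v) (hne : u ≠ v) (hnadj : ¬G.Adj u v) :
    ∃ c, G.Adj u c ∧ G.Adj c v := by
  obtain ⟨p⟩ := h
  induction p with
  | nil => exact absurd rfl hne
  | @cons u x v hux q ih =>
    by_cases hxv : x = v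
    · exact absurd (hxv ▸ hux) hnadj
    by_cases hxv_adj : G.Adj x v
    · exact ⟨x, hux, hxv_adj⟩
    obtain ⟨c, hxc, hcv⟩ := ih hxv hxv_adj
    by_cases huc : G.Adj u c
    · exact ⟨c, huc, hcv⟩
    have huc_ne : u ≠ c := by rintro rfl; exact hnadj hcv
    exact absurd ⟨hux, hxc, hcv, huc, hxv_adj, hnadj⟩
      (hcog u x c v hux.ne huc_ne hne hxc.ne hxv hcv.ne)

section WeightEquitable

variable [Fintype V] [DecidableEq V] {G : SimpleGraph V} [DecidableRel G.Adj] {ν : V → ℝ}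

theorem wInt_pair {v w : V} (hvw : v ≠ w) (u : V) :
    wInt G ν {v, w} u =
      ((if G.Adj u v then ν v else 0) + (if G.Adj u w then ν w else 0)) / ν u := by
  rw [wInt, sum_pair hvw]

theorem eq_of_adj_of_wInt_pair_eq (hν : ∀ v, 0 < ν v) {u u' : V} (hadj : G.Adj u u')
    (h : wInt G ν {u, u'} u = wInt G ν {u, u'} u') : ν u = ν u' := by
  rw [wInt_pair hadj.ne, wInt_pair hadj.ne] at h
  simp only [G.irrefl, hadj, hadj.symm, if_true, if_false, zero_add, add_zero] at h
  rw [div_eq_div_iff (hν u).ne' (hν u').ne'] at h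
  exact ((mul_self_inj (hν u').le (hν u).le).1 h).symm

theorem card_filter_adj_eq_of_wInt_eq {D : Finset V} (hD : #D = 2) (hν : ∀ v, 0 < ν v)
    {u u' : V} (hνu : ν u = ν u') (h : wInt G ν D u = wInt G ν D u') :
    #(D.filter (G.Adj u)) = #(D.filter (G.Adj u')) := by
  rw [wInt, wInt, hνu, div_left_inj' (hν u').ne', ← sum_filter, ← sum_filter] at h
  exact card_eq_of_sum_eq_of_subset_of_card_eq_two hD (fun v _ ↦ hν v)
    (filter_subset _ _) (filter_subset _ _) h

variable {m : ℕ} {Vc : Fin m → Finset V}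

theorem IsCograph.adj_of_adj_of_common_adj (hcog : IsCograph G) (hν : ∀ v, 0 < ν v)
    (hsize : ∀ i, #(Vc i) = 2) (hWE : IsWeightEquitable G ν Vc)
    {i j : Fin m} {u u' c d : V} (hu : u ∈ Vc i) (hu' : u' ∈ Vc i) (hnadj : ¬G.Adj u u')
    (hcu : G.Adj c u) (hcu' : G.Adj c u') (hc : c ∈ Vc j) (hd : d ∈ Vc j) (hcd : c ≠ d)
    (hud : G.Adj u d) : G.Adj u' d := by
  by_contra hu'd
  have hne : u ≠ u' := by rintro rfl; exact hu'd hud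
  by_cases hcd_adj : G.Adj c d
  · have hVj := eq_pair_of_card_eq_two (hsize j) hc hd hcd
    have hνcd : ν c = ν d := eq_of_adj_of_wInt_pair_eq hν hcd_adj (hVj ▸ hWE j j c hc d hd)
    have hcross := hWE j i c hc d hd
    rw [eq_pair_of_card_eq_two (hsize i) hu hu' hne, wInt_pair hne, wInt_pair hne, hνcd,
      div_left_inj' (hν d).ne'] at hcross
    rw [if_pos hcu, if_pos hcu', if_pos hud.symm, if_neg fun h ↦ hu'd h.symm] at hcross
    linarith [hν u']
  · have hu'd_ne : u' ≠ d := by rintro rfl; exact hnadj hud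
    exact hcog u' c u d hcu'.ne' hne.symm hu'd_ne hcu.ne hcd hud.ne
      ⟨hcu'.symm, hcu, hud, fun h ↦ hnadj h.symm, hcd_adj, hu'd⟩

theorem IsCograph.weight_eq_of_mem_cell (hcog : IsCograph G) (hG : G.Connected)
    (hν : ∀ v, 0 < ν v) (hpart : IsPartition Vc) (hsize : ∀ i, #(Vc i) = 2)
    (hWE : IsWeightEquitable G ν Vc) {i : Fin m} {u u' : V} (hu : u ∈ Vc i) (hu' : u' ∈ Vc i) :
    ν u = ν u' := by
  obtain rfl | hne := eq_or_ne u u'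
  · rfl
  by_cases hadj : G.Adj u u'
  · exact eq_of_adj_of_wInt_pair_eq hν hadj
      (eq_pair_of_card_eq_two (hsize i) hu hu' hne ▸ hWE i i u hu u' hu')
  obtain ⟨c, huc, hcu'⟩ := hcog.exists_adj_adj_of_reachable (hG.preconnected u u') hne hadj
  obtain ⟨j, hc, -⟩ := hpart c
  obtain ⟨d, hd, hdc⟩ := exists_mem_ne (by rw [hsize j]; norm_num) c
  have hsame : G.Adj u d ↔ G.Adj u' d :=
    ⟨hcog.adj_of_adj_of_common_adj hν hsize hWE hu hu' hadj huc.symm hcu' hc hd hdc.symm,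
      hcog.adj_of_adj_of_common_adj hν hsize hWE hu' hu (fun h ↦ hadj h.symm) hcu' huc.symm
        hc hd hdc.symm⟩
  have h := hWE i j u hu u' hu'
  rw [eq_pair_of_card_eq_two (hsize j) hc hd hdc.symm, wInt_pair hdc.symm, wInt_pair hdc.symm,
    if_pos huc, if_pos hcu'.symm] at h
  simp only [hsame] at h
  have hpos : 0 < ν c + if G.Adj u' d then ν d else 0 := by
    split_ifs <;> linarith [hν c, hν d]
  rw [div_eq_div_iff (hν u).ne' (hν u').ne'] at h
  exact (mul_left_cancel₀ hpos.ne' h).symm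

end WeightEquitable

theorem cograph_weightEquitable_pairs_is_equitable_general
    [Fintype V] [DecidableEq V] (G : SimpleGraph V) [DecidableRel G.Adj]
    (hG : G.Connected) (hcog : IsCograph G)
    (ν : V → ℝ)
    (hν : ∀ v, 0 < ν v)
    {m : ℕ} (Vc : Fin m → Finset V)
    (hpart : IsPartition Vc) (hsize : ∀ i, (Vc i).card = 2)
    (hWE : IsWeightEquitable G ν Vc) :
    IsEquitable G Vc := fun i j _ hu _ hu' ↦
  card_filter_adj_eq_of_wInt_eq (hsize j) hν
    (hcog.weight_eq_of_mem_cell hG hν hpart hsize hWE hu hu') (hWE i j _ hu _ hu')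

/-- In a connected cograph, every weight-equitable partition into `n/2` cells of size `2`
is equitable. -/
theorem cograph_weightEquitable_pairs_is_equitable
    [Fintype V] [DecidableEq V] (G : SimpleGraph V) [DecidableRel G.Adj]
    (hG : G.Connected) (hcog : IsCograph G)
    (ν : V → ℝ) (lam : ℝ)
    (hν : ∀ v, 0 < ν v)
    (heig : (G.adjMatrix ℝ).mulVec ν = lam • ν)
    {m : ℕ} (Vc : Fin m → Finset V)
    (hm : 2 * m = Fintype.card V)
    (hpart : IsPartition Vc) (hsize : ∀ i, (Vc i).card = 2)
    (hWE : IsWeightEquitable G ν Vc) :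
    IsEquitable G Vc :=
  cograph_weightEquitable_pairs_is_equitable_general G hG hcog ν hν Vc hpart hsize hWE
end
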